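/- arXiv:1108.1315 — 11 statements merged into one kernel-verified Lean document; each statement's English description precedes it below -/
import Mathlib

section
/- Let w_1, …, w_n be positive real weights and H ≥ n a natural number. If y and y' are both valid apportionments of H seats for w by the divisor method with rounding upwards, then y = y'. (Uniqueness of the upward-rounding divisor apportionment.) -/
/-- `y` is a valid apportionment of `H` seats for the weights `w` by the
divisor method with rounding upwards: `y` has positive integer components
summing to `H`, and there is a divisor `D > 0` with `y i = ⌈w i / D⌉`. -/
def IsValidApp {n : ℕ} (w : Fin n → ℝ) (H : ℕ) (y : Fin n → ℕ) : Prop :=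
  (∀ i, 0 < y i) ∧ (∑ i, y i = H) ∧ ∃ D : ℝ, 0 < D ∧ ∀ i, (y i : ℤ) = ⌈w i / D⌉

lemma aux_unique {n : ℕ} (w : Fin n → ℝ) (hw : ∀ i, 0 < w i)
    (y y' : Fin n → ℕ) (hsum : ∑ i, y i = ∑ i, y' i)
    (D D' : ℝ) (hD : 0 < D) (hD' : 0 < D') (hle : D ≤ D')
    (h1 : ∀ i, (y i : ℤ) = ⌈w i / D⌉) (h2 : ∀ i, (y' i : ℤ) = ⌈w i / D'⌉) :
    y = y' := by
  have hpt : ∀ i, y' i ≤ y i := by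
    intro i
    have hdiv : w i / D' ≤ w i / D := div_le_div_of_nonneg_left (hw i).le hD hle
    have : (y' i : ℤ) ≤ (y i : ℤ) := by
      rw [h1 i, h2 i]; exact Int.ceil_le_ceil hdiv
    exact_mod_cast this
  funext i
  have := (Finset.sum_eq_sum_iff_of_le (fun i _ => hpt i)).mp hsum.symm i (Finset.mem_univ i)
  exact this.symm

/-- Uniqueness of the upward-rounding divisor apportionment. -/
theorem divisor_method_upward_unique {n : ℕ} (w : Fin n → ℝ)
    (hw : ∀ i, 0 < w i) (H : ℕ) (hH : n ≤ H) (y y' : Fin n → ℕ)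
    (hy : IsValidApp w H y) (hy' : IsValidApp w H y') : y = y' := by
  obtain ⟨hypos, hysum, D, hD, hyD⟩ := hy
  obtain ⟨hypos', hysum', D', hD', hyD'⟩ := hy'
  rcases le_total D D' with h | h
  · exact aux_unique w hw y y' (hysum.trans hysum'.symm) D D' hD hD' h hyD hyD'
  · exact (aux_unique w hw y' y (hysum'.trans hysum.symm) D' D hD' hD h hyD' hyD).symm
end

section
/- Let w_1, …, w_n be positive real weights, H ≥ n a natural number, and y = (y_1, …, y_n) a vector of positive integers with ∑_{i=1}^n y_i = H. Then y is a valid apportionment of H seats for w by the divisor method with rounding upwards if and only if for every ordered pair (i, j) with i ≠ j and y_j ≥ 2 one has w_i / y_i < w_j / (y_j − 1). (Min–max characterization of upward-rounding divisor apportionments.) -/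
/-- Min–max characterization of upward-rounding divisor
apportionments: a positive vector `y` summing to `H` is valid iff for every
ordered pair `(i, j)` with `i ≠ j` and `y j ≥ 2` one has
`w i / y i < w j / (y j − 1)`. -/
theorem divisor_method_upward_minmax {n : ℕ} (w : Fin n → ℝ)
    (hw : ∀ i, 0 < w i) (H : ℕ) (hH : n ≤ H) (y : Fin n → ℕ)
    (hpos : ∀ i, 0 < y i) (hsum : ∑ i, y i = H) :
    IsValidApp w H y ↔
      ∀ i j, i ≠ j → 2 ≤ y j →
        w i / (y i : ℝ) < w j / ((y j : ℝ) - 1) := by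
  constructor
  · rintro ⟨-, -, D, hD, hDy⟩ i j hij hyj
    have hyi : (0:ℝ) < (y i : ℝ) := by exact_mod_cast hpos i
    have hyj1 : (0:ℝ) < (y j : ℝ) - 1 := by
      have : (2:ℝ) ≤ (y j : ℝ) := by exact_mod_cast hyj
      linarith
    have h1 : w i / D ≤ (y i : ℝ) := by
      have := Int.le_ceil (w i / D)
      rw [← hDy i] at this
      exact_mod_cast this
    have h2 : (y j : ℝ) - 1 < w j / D := by
      have := Int.ceil_lt_add_one (w j / D)
      rw [← hDy j] at this
      push_cast at this
      linarith
    have hA : w i / (y i : ℝ) ≤ D := by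
      rw [div_le_iff₀ hyi]
      rw [div_le_iff₀ hD] at h1
      linarith [mul_comm (y i : ℝ) D]
    have hB : D < w j / ((y j : ℝ) - 1) := by
      rw [lt_div_iff₀ hyj1]
      rw [lt_div_iff₀ hD] at h2
      linarith [mul_comm ((y j : ℝ) - 1) D]
    linarith
  · intro h
    refine ⟨hpos, hsum, ?_⟩
    rcases Nat.eq_zero_or_pos n with hn | hn
    · exact ⟨1, one_pos, fun i => absurd i.isLt (by omega)⟩
    have hne : (Finset.univ : Finset (Fin n)).Nonempty := by
      have : Nonempty (Fin n) := ⟨⟨0, hn⟩⟩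
      exact Finset.univ_nonempty
    set M : ℝ := Finset.univ.sup' hne (fun i => w i / (y i : ℝ)) with hM
    have hyi : ∀ i, (0:ℝ) < (y i : ℝ) := fun i => by exact_mod_cast hpos i
    have hMle : ∀ i, w i / (y i : ℝ) ≤ M := by
      intro i
      rw [hM]
      exact Finset.le_sup' (fun i => w i / (y i : ℝ)) (Finset.mem_univ i)
    have hMpos : 0 < M :=
      lt_of_lt_of_le (div_pos (hw ⟨0, hn⟩) (hyi ⟨0, hn⟩)) (hMle ⟨0, hn⟩)
    have key : ∀ j, 2 ≤ y j → M < w j / ((y j : ℝ) - 1) := by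
      intro j hyj
      have hyj1 : (0:ℝ) < (y j : ℝ) - 1 := by
        have : (2:ℝ) ≤ (y j : ℝ) := by exact_mod_cast hyj
        linarith
      rw [hM, Finset.sup'_lt_iff]
      intro i _
      by_cases hij : i = j
      · subst hij
        exact div_lt_div_of_pos_left (hw i) hyj1 (by linarith [hyi i])
      · exact h i j hij hyj
    refine ⟨M, hMpos, fun i => ?_⟩
    symm
    rw [Int.ceil_eq_iff]
    constructor
    · push_cast
      rcases Nat.lt_or_ge (y i) 2 with h1 | h2
      · have hp := hpos i
        have : y i = 1 := by omega
        rw [this]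
        simpa using div_pos (hw i) hMpos
      · have hgt : (0:ℝ) < (y i : ℝ) - 1 := by
          have : (2:ℝ) ≤ (y i : ℝ) := by exact_mod_cast h2
          linarith
        have := key i h2
        rw [lt_div_iff₀ hMpos]
        rw [lt_div_iff₀ hgt] at this
        linarith [mul_comm ((y i : ℝ) - 1) M]
    · have := hMle i
      rw [div_le_iff₀ (hyi i)] at this
      rw [div_le_iff₀ hMpos]
      push_cast
      linarith [mul_comm (y i : ℝ) M]
end

section
/- Let p_1 > p_2 > … > p_n > 0 be strictly decreasing positive populations, H ≥ n a natural number, and y = (y_1, …, y_n) a vector of positive integers with ∑_{i=1}^n y_i = H. Then for a real number E, the vector y is a valid apportionment of H seats for the power-weighted populations (p_1^E, …, p_n^E) by the divisor method with rounding upwards if and only if: for every ordered pair (i, j) with y_j ≥ 2 and p_i > p_j one has E < E(i, j), and for every ordered pair (i, j) with y_j ≥ 2 and p_i < p_j one has E > E(i, j), where E(i,j) = log(y_i / (y_j − 1)) / log(p_i / p_j). (Characterization of the exponent-range of a seat vector.) -/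
/-- The critical exponent `E(i,j) = log (yᵢ / (yⱼ − 1)) / log (pᵢ / pⱼ)`. -/
noncomputable def critExp {n : ℕ} (p : Fin n → ℝ) (y : Fin n → ℕ)
    (i j : Fin n) : ℝ :=
  Real.log ((y i : ℝ) / ((y j : ℝ) - 1)) / Real.log (p i / p j)

lemma helper1 (pi pj yi yj E : ℝ) (hpi : 0 < pi) (hpj : 0 < pj)
    (hyi : 0 < yi) (hyj : 0 < yj) :
    pi ^ E / yi < pj ^ E / yj ↔ E * Real.log (pi / pj) < Real.log (yi / yj) := by
  have h1 : (0:ℝ) < pi / pj := div_pos hpi hpj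
  rw [div_lt_div_iff₀ hyi hyj, ← Real.log_rpow h1,
    Real.log_lt_log_iff (Real.rpow_pos_of_pos h1 E) (div_pos hyi hyj),
    Real.div_rpow hpi.le hpj.le,
    div_lt_div_iff₀ (Real.rpow_pos_of_pos hpj E) hyj]
  constructor <;> intro h <;> linarith

lemma validIff {n : ℕ} (p : Fin n → ℝ) (hppos : ∀ i, 0 < p i) (H : ℕ)
    (y : Fin n → ℕ) (hpos : ∀ i, 0 < y i) (hsum : ∑ i, y i = H) (E : ℝ) :
    IsValidApp (fun i => p i ^ E) H y ↔
      ∀ i j, 2 ≤ y j → p i ^ E / y i < p j ^ E / ((y j : ℝ) - 1) := by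
  constructor
  · rintro ⟨-, -, D, hD, hceil⟩ i j hyj
    have hwi : (0:ℝ) < p i ^ E := Real.rpow_pos_of_pos (hppos i) E
    have hwj : (0:ℝ) < p j ^ E := Real.rpow_pos_of_pos (hppos j) E
    have h1 : p i ^ E / D ≤ (y i : ℝ) := by
      have := Int.ceil_le.mp (le_of_eq (hceil i).symm)
      simpa using this
    have h2 : ((y j : ℝ) - 1) < p j ^ E / D := by
      have : ((y j : ℤ) - 1) < ⌈p j ^ E / D⌉ := by
        rw [← hceil j]; omega
      have := Int.lt_ceil.mp this
      push_cast at this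
      simpa using this
    have hyi : (0:ℝ) < (y i : ℝ) := by exact_mod_cast hpos i
    have hyj' : (0:ℝ) < (y j : ℝ) - 1 := by
      have : (2:ℝ) ≤ (y j : ℝ) := by exact_mod_cast hyj
      linarith
    rw [div_lt_div_iff₀ hyi hyj']
    rw [div_le_iff₀ hD] at h1
    rw [lt_div_iff₀ hD] at h2
    nlinarith
  · intro h
    refine ⟨hpos, hsum, ?_⟩
    rcases isEmpty_or_nonempty (Fin n) with he | hne
    · exact ⟨1, one_pos, fun i => isEmptyElim i⟩
    · set f : Fin n → ℝ := fun i => p i ^ E / (y i : ℝ) with hf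
      obtain ⟨k, -, hk⟩ := Finset.exists_mem_eq_sup' Finset.univ_nonempty f
      set D := Finset.univ.sup' Finset.univ_nonempty f with hDdef
      have hfpos : ∀ i, 0 < f i := fun i =>
        div_pos (Real.rpow_pos_of_pos (hppos i) E) (by exact_mod_cast hpos i)
      have hD : 0 < D := hk ▸ hfpos k
      refine ⟨D, hD, fun i => ?_⟩
      have hyi : (0:ℝ) < (y i : ℝ) := by exact_mod_cast hpos i
      symm
      rw [Int.ceil_eq_iff]
      constructor
      · rcases Nat.lt_or_ge (y i) 2 with h1 | h2
        · have : y i = 1 := by have := hpos i; omega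
          rw [this]
          push_cast
          simpa using div_pos (Real.rpow_pos_of_pos (hppos i) E) hD
        · have hstep := h k i h2
          have hyi' : (0:ℝ) < (y i : ℝ) - 1 := by
            have : (2:ℝ) ≤ (y i : ℝ) := by exact_mod_cast h2
            linarith
          have hDlt : D < p i ^ E / ((y i : ℝ) - 1) := hk ▸ hstep
          rw [lt_div_iff₀ hyi'] at hDlt
          push_cast
          rw [lt_div_iff₀ hD]
          nlinarith
      · have hle : f i ≤ D := Finset.le_sup' f (Finset.mem_univ i)
        rw [hf] at hle
        simp only at hle
        rw [div_le_iff₀ hyi] at hle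
        rw [div_le_iff₀ hD]
        push_cast
        nlinarith

/-- Characterization of the exponent-range of a seat vector:
`y` is a valid apportionment for the power-weighted populations `p ^ E` iff
`E < E(i,j)` whenever `y j ≥ 2` and `p i > p j`, and `E > E(i,j)` whenever
`y j ≥ 2` and `p i < p j`. -/
theorem exponent_range_characterization {n : ℕ} (p : Fin n → ℝ)
    (hppos : ∀ i, 0 < p i) (hdec : ∀ i j : Fin n, i < j → p j < p i)
    (H : ℕ) (hH : n ≤ H) (y : Fin n → ℕ) (hpos : ∀ i, 0 < y i)
    (hsum : ∑ i, y i = H) (E : ℝ) :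
    IsValidApp (fun i => p i ^ E) H y ↔
      ((∀ i j, 2 ≤ y j → p j < p i → E < critExp p y i j) ∧
        (∀ i j, 2 ≤ y j → p i < p j → critExp p y i j < E)) := by
  rw [validIff p hppos H y hpos hsum E]
  have hyj' : ∀ j : Fin n, 2 ≤ y j → (0:ℝ) < (y j : ℝ) - 1 := fun j hj => by
    have : (2:ℝ) ≤ (y j : ℝ) := by exact_mod_cast hj
    linarith
  have hyi' : ∀ i : Fin n, (0:ℝ) < (y i : ℝ) := fun i => by exact_mod_cast hpos i
  constructor
  · intro h
    constructor
    · intro i j h2 hlt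
      have := (helper1 _ _ _ _ E (hppos i) (hppos j) (hyi' i) (hyj' j h2)).mp
        (h i j h2)
      have hL : 0 < Real.log (p i / p j) :=
        Real.log_pos ((one_lt_div (hppos j)).mpr hlt)
      rw [critExp, lt_div_iff₀ hL]
      linarith
    · intro i j h2 hlt
      have := (helper1 _ _ _ _ E (hppos i) (hppos j) (hyi' i) (hyj' j h2)).mp
        (h i j h2)
      have hL : Real.log (p i / p j) < 0 :=
        Real.log_neg (div_pos (hppos i) (hppos j)) ((div_lt_one (hppos j)).mpr hlt)
      rw [critExp, div_lt_iff_of_neg hL]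
      linarith
  · rintro ⟨h1, h2⟩ i j hj2
    rw [helper1 _ _ _ _ E (hppos i) (hppos j) (hyi' i) (hyj' j hj2)]
    rcases lt_trichotomy (p i) (p j) with hlt | heq | hgt
    · have := h2 i j hj2 hlt
      have hL : Real.log (p i / p j) < 0 :=
        Real.log_neg (div_pos (hppos i) (hppos j)) ((div_lt_one (hppos j)).mpr hlt)
      rw [critExp, div_lt_iff_of_neg hL] at this
      linarith
    · have hij : i = j := by
        by_contra hne
        rcases (Ne.lt_or_gt hne) with hlt | hlt
        · exact (hdec i j hlt).ne' heq
        · exact (hdec j i hlt).ne heq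
      subst hij
      rw [heq] at *
      have : p i / p i = 1 := div_self (hppos i).ne'
      rw [this, Real.log_one, mul_zero]
      apply Real.log_pos
      rw [one_lt_div (hyj' i hj2)]
      linarith
    · have := h1 i j hj2 hgt
      have hL : 0 < Real.log (p i / p j) :=
        Real.log_pos ((one_lt_div (hppos j)).mpr hgt)
      rw [critExp, lt_div_iff₀ hL] at this
      linarith
end

section
/- Let p_1 > p_2 > … > p_n > 0 be strictly decreasing positive populations, H ≥ n a natural number, and y = (y_1, …, y_n) a vector of positive integers with ∑_{i=1}^n y_i = H. Then the set of real exponents E for which y is a valid apportionment of H seats for (p_1^E, …, p_n^E) by the divisor method with rounding upwards is order-convex: if y is valid at exponents E and E' with E < E', and E < E'' < E', then y is also valid at exponent E''. (The exponent-range is an interval.) -/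
private lemma bounds_of_ceil {x D : ℝ} {m : ℕ} (hD : 0 < D) (h : (m : ℤ) = ⌈x / D⌉) :
    ((m : ℝ) - 1) * D < x ∧ x ≤ (m : ℝ) * D := by
  have h1 : ((m : ℤ) : ℝ) - 1 < x / D ∧ x / D ≤ ((m : ℤ) : ℝ) := Int.ceil_eq_iff.mp h.symm
  push_cast at h1
  exact ⟨(lt_div_iff₀ hD).mp h1.1, (div_le_iff₀ hD).mp h1.2⟩

private lemma rpow_lt_of_between {r c E E' E'' : ℝ} (hr : 0 < r) (h1 : r ^ E < c)
    (h2 : r ^ E' < c) (hE : E ≤ E'') (hE' : E'' ≤ E') : r ^ E'' < c := by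
  rcases le_total r 1 with h | h
  · exact lt_of_le_of_lt (Real.rpow_le_rpow_of_exponent_ge hr h hE) h1
  · exact lt_of_le_of_lt (Real.rpow_le_rpow_of_exponent_le h hE') h2

/-- The exponent-range is an interval: if `y` is valid at
exponents `E < E'` and `E < E'' < E'`, then `y` is valid at `E''` as well. -/
theorem exponent_range_orderConvex {n : ℕ} (p : Fin n → ℝ)
    (hppos : ∀ i, 0 < p i) (hdec : ∀ i j : Fin n, i < j → p j < p i)
    (H : ℕ) (hH : n ≤ H) (y : Fin n → ℕ) (hpos : ∀ i, 0 < y i)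
    (hsum : ∑ i, y i = H) (E E' E'' : ℝ) (hEE' : E < E')
    (hE : IsValidApp (fun i => p i ^ E) H y)
    (hE' : IsValidApp (fun i => p i ^ E') H y)
    (h₁ : E < E'') (h₂ : E'' < E') :
    IsValidApp (fun i => p i ^ E'') H y := by
  obtain ⟨-, -, D, hD, hDceil⟩ := hE
  obtain ⟨-, -, D', hD', hD'ceil⟩ := hE'
  refine ⟨hpos, hsum, ?_⟩
  rcases Nat.eq_zero_or_pos n with hn | hn
  · exact ⟨1, one_pos, fun i => absurd i.isLt (by omega)⟩
  haveI : Nonempty (Fin n) := Fin.pos_iff_nonempty.mp hn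
  have hyR : ∀ i, (0 : ℝ) < (y i : ℝ) := fun i => by exact_mod_cast hpos i
  have hp'' : ∀ i, (0 : ℝ) < p i ^ E'' := fun i => Real.rpow_pos_of_pos (hppos i) _
  set D'' := Finset.univ.sup' Finset.univ_nonempty (fun i => p i ^ E'' / (y i : ℝ)) with hD''def
  have hD''pos : 0 < D'' := by
    obtain ⟨i⟩ := ‹Nonempty (Fin n)›
    have h := Finset.le_sup' (fun k => p k ^ E'' / (y k : ℝ)) (Finset.mem_univ i)
    rw [← hD''def] at h
    exact lt_of_lt_of_le (div_pos (hp'' i) (hyR i)) h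
  refine ⟨D'', hD''pos, fun i => ?_⟩
  symm
  rw [Int.ceil_eq_iff]
  push_cast
  constructor
  · -- (y i : ℝ) - 1 < p i ^ E'' / D''
    rw [lt_div_iff₀ hD''pos]
    rcases Nat.eq_or_lt_of_le (hpos i) with h1 | h1
    · have : ((y i : ℝ) - 1) = 0 := by rw [← h1]; norm_num
      rw [this, zero_mul]; exact hp'' i
    · have hyi1 : (0 : ℝ) < (y i : ℝ) - 1 := by
        have : (2 : ℝ) ≤ (y i : ℝ) := by exact_mod_cast h1
        linarith
      rw [mul_comm, ← lt_div_iff₀ hyi1, hD''def, Finset.sup'_lt_iff]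
      intro j _
      -- p j ^ E'' / y j < p i ^ E'' / (y i - 1)
      rw [div_lt_div_iff₀ (hyR j) hyi1]
      -- key pairwise inequality from validity at E and E'
      have key : ∀ F DD : ℝ, 0 < DD → (∀ k, ((y k : ℝ) - 1) * DD < p k ^ F ∧
          p k ^ F ≤ (y k : ℝ) * DD) → (p j / p i) ^ F < (y j : ℝ) / ((y i : ℝ) - 1) := by
        intro F DD hDD hb
        have hji : p j ^ F * ((y i : ℝ) - 1) < (y j : ℝ) * p i ^ F := by
          calc p j ^ F * ((y i : ℝ) - 1) ≤ (y j : ℝ) * DD * ((y i : ℝ) - 1) :=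
                mul_le_mul_of_nonneg_right (hb j).2 (le_of_lt hyi1)
            _ = (y j : ℝ) * (((y i : ℝ) - 1) * DD) := by ring
            _ < (y j : ℝ) * p i ^ F := by
                exact mul_lt_mul_of_pos_left (hb i).1 (hyR j)
        rw [Real.div_rpow (le_of_lt (hppos j)) (le_of_lt (hppos i)),
          div_lt_div_iff₀ (Real.rpow_pos_of_pos (hppos i) F) hyi1]
        exact hji
      have kE := key E D hD (fun k => bounds_of_ceil hD (hDceil k))
      have kE' := key E' D' hD' (fun k => bounds_of_ceil hD' (hD'ceil k))
      have kE'' := rpow_lt_of_between (div_pos (hppos j) (hppos i)) kE kE'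
        (le_of_lt h₁) (le_of_lt h₂)
      rw [Real.div_rpow (le_of_lt (hppos j)) (le_of_lt (hppos i)),
        div_lt_div_iff₀ (Real.rpow_pos_of_pos (hppos i) E'') hyi1] at kE''
      linarith
  · -- p i ^ E'' / D'' ≤ y i
    rw [div_le_iff₀ hD''pos]
    have := Finset.le_sup' (fun k => p k ^ E'' / (y k : ℝ)) (Finset.mem_univ i)
    rw [← hD''def] at this
    calc p i ^ E'' = p i ^ E'' / (y i : ℝ) * (y i : ℝ) := (div_mul_cancel₀ _ (ne_of_gt (hyR i))).symm
      _ ≤ D'' * (y i : ℝ) := mul_le_mul_of_nonneg_right this (le_of_lt (hyR i))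
      _ = (y i : ℝ) * D'' := mul_comm _ _
end

section
/- Let p_1 > p_2 > … > p_n > 0 be strictly decreasing positive populations and H ≥ n a natural number. Let 0 < E < E' be real exponents, let y be a valid apportionment of H seats for (p_1^E, …, p_n^E) and y' a valid apportionment of H seats for (p_1^{E'}, …, p_n^{E'}), both by the divisor method with rounding upwards. Then y is majorized by y': for every k with 1 ≤ k ≤ n, ∑_{i=1}^k y_i ≤ ∑_{i=1}^k y'_i. (Monotonicity in the exponent via the transfer argument.) -/
/-- Monotonicity in the exponent via the transfer argument:
if `0 < E < E'`, the apportionment at exponent `E` is majorized by the one at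
exponent `E'`: for each `k` with `1 ≤ k ≤ n`, the aggregate seats of the `k`
largest states (indices `0, …, k−1`) at `E` is at most that at `E'`. -/
theorem majorization_in_exponent {n : ℕ} (p : Fin n → ℝ)
    (hppos : ∀ i, 0 < p i) (hdec : ∀ i j : Fin n, i < j → p j < p i)
    (H : ℕ) (hH : n ≤ H) (E E' : ℝ) (hE : 0 < E) (hEE' : E < E')
    (y y' : Fin n → ℕ)
    (hy : IsValidApp (fun i => p i ^ E) H y)
    (hy' : IsValidApp (fun i => p i ^ E') H y') :
    ∀ k : ℕ, 1 ≤ k → k ≤ n →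
      ∑ i ∈ Finset.univ.filter (fun i : Fin n => (i : ℕ) < k), y i ≤
        ∑ i ∈ Finset.univ.filter (fun i : Fin n => (i : ℕ) < k), y' i := by
  intro k hk1 hkn
  by_contra hlt
  push_neg at hlt
  obtain ⟨hy_pos, hy_sum, D, hD, hyD⟩ := hy
  obtain ⟨hy'_pos, hy'_sum, D', hD', hy'D⟩ := hy'
  obtain ⟨i, hi_mem, hi⟩ := Finset.exists_lt_of_sum_lt hlt
  have hcomp : ∑ m ∈ Finset.univ.filter (fun m : Fin n => ¬ (m : ℕ) < k), y m <
      ∑ m ∈ Finset.univ.filter (fun m : Fin n => ¬ (m : ℕ) < k), y' m := by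
    have h1 := Finset.sum_filter_add_sum_filter_not Finset.univ
      (fun m : Fin n => (m : ℕ) < k) y
    have h2 := Finset.sum_filter_add_sum_filter_not Finset.univ
      (fun m : Fin n => (m : ℕ) < k) y'
    rw [hy_sum] at h1
    rw [hy'_sum] at h2
    omega
  obtain ⟨j, hj_mem, hj⟩ := Finset.exists_lt_of_sum_lt hcomp
  simp only [Finset.mem_filter, Finset.mem_univ, true_and] at hi_mem hj_mem
  have hij : i < j := by
    have : (i : ℕ) < (j : ℕ) := by omega
    exact this
  have hpij : p j < p i := hdec i j hij
  -- ceiling inequalities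
  have hA : (y i : ℝ) < p i ^ E / D + 1 := by
    have h := Int.ceil_lt_add_one (p i ^ E / D)
    rw [← hyD i] at h
    exact_mod_cast h
  have hB : p j ^ E / D ≤ (y j : ℝ) := by
    have h := Int.le_ceil (p j ^ E / D)
    rw [← hyD j] at h
    exact_mod_cast h
  have hC : (y' j : ℝ) < p j ^ E' / D' + 1 := by
    have h := Int.ceil_lt_add_one (p j ^ E' / D')
    rw [← hy'D j] at h
    exact_mod_cast h
  have hD2 : p i ^ E' / D' ≤ (y' i : ℝ) := by
    have h := Int.le_ceil (p i ^ E' / D')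
    rw [← hy'D i] at h
    exact_mod_cast h
  have hi' : (y' i : ℝ) + 1 ≤ (y i : ℝ) := by exact_mod_cast hi
  have hj' : (y j : ℝ) + 1 ≤ (y' j : ℝ) := by exact_mod_cast hj
  -- multiplied-out forms
  have h1 : D * (y' i : ℝ) < p i ^ E := by
    have : (y' i : ℝ) < p i ^ E / D := by linarith
    calc D * (y' i : ℝ) < D * (p i ^ E / D) := by
          exact mul_lt_mul_of_pos_left this hD
      _ = p i ^ E := by field_simp
  have h2 : p j ^ E ≤ D * (y j : ℝ) := by
    have := mul_le_mul_of_nonneg_left hB (le_of_lt hD)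
    calc p j ^ E = D * (p j ^ E / D) := by field_simp
      _ ≤ D * (y j : ℝ) := this
  have h3 : D' * (y j : ℝ) < p j ^ E' := by
    have : (y j : ℝ) < p j ^ E' / D' := by linarith
    calc D' * (y j : ℝ) < D' * (p j ^ E' / D') := mul_lt_mul_of_pos_left this hD'
      _ = p j ^ E' := by field_simp
  have h4 : p i ^ E' ≤ D' * (y' i : ℝ) := by
    have := mul_le_mul_of_nonneg_left hD2 (le_of_lt hD')
    calc p i ^ E' = D' * (p i ^ E' / D') := by field_simp
      _ ≤ D' * (y' i : ℝ) := this
  -- key exponent inequality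
  have hr : p j ^ (E' - E) < p i ^ (E' - E) :=
    Real.rpow_lt_rpow (le_of_lt (hppos j)) hpij (by linarith)
  have e1 : p j ^ E' = p j ^ E * p j ^ (E' - E) := by
    rw [← Real.rpow_add (hppos j)]; ring_nf
  have e2 : p i ^ E' = p i ^ E * p i ^ (E' - E) := by
    rw [← Real.rpow_add (hppos i)]; ring_nf
  have hpiE : (0:ℝ) < p i ^ E := Real.rpow_pos_of_pos (hppos i) E
  have hpjE : (0:ℝ) < p j ^ E := Real.rpow_pos_of_pos (hppos j) E
  have hkey : p i ^ E * p j ^ E' < p j ^ E * p i ^ E' := by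
    rw [e1, e2]
    nlinarith [mul_pos hpiE hpjE]
  -- positivity of seat counts
  have hyi' : (1:ℝ) ≤ (y' i : ℝ) := by exact_mod_cast hy'_pos i
  have hyj : (1:ℝ) ≤ (y j : ℝ) := by exact_mod_cast hy_pos j
  -- combine
  have hL : (D * (y' i : ℝ)) * (D' * (y j : ℝ)) < p i ^ E * p j ^ E' := by
    have ha : (0:ℝ) ≤ D * (y' i : ℝ) := by positivity
    have hb : (0:ℝ) ≤ D' * (y j : ℝ) := by positivity
    exact mul_lt_mul'' h1 h3 ha hb
  have hR : p j ^ E * p i ^ E' ≤ (D * (y j : ℝ)) * (D' * (y' i : ℝ)) := by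
    have := Real.rpow_pos_of_pos (hppos i) E'
    exact mul_le_mul h2 h4 (le_of_lt this) (by positivity)
  nlinarith [hL, hR, hkey]
end

section
/- Let p_1 > p_2 > … > p_n > 0 be strictly decreasing positive populations and H ≥ n a natural number. Let 0 < E < E' be real exponents, let y be a valid apportionment of H seats for (p_1^E, …, p_n^E) and y' a valid apportionment of H seats for (p_1^{E'}, …, p_n^{E'}), both by the divisor method with rounding upwards. Then the seat number of the largest state is nondecreasing in the exponent: y_1 ≤ y'_1. -/
/-- The seat number of the largest state (index `0`) is
nondecreasing in the exponent. -/
theorem largest_state_monotone {n : ℕ} (hn : 0 < n) (p : Fin n → ℝ)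
    (hppos : ∀ i, 0 < p i) (hdec : ∀ i j : Fin n, i < j → p j < p i)
    (H : ℕ) (hH : n ≤ H) (E E' : ℝ) (hE : 0 < E) (hEE' : E < E')
    (y y' : Fin n → ℕ)
    (hy : IsValidApp (fun i => p i ^ E) H y)
    (hy' : IsValidApp (fun i => p i ^ E') H y') :
    y ⟨0, hn⟩ ≤ y' ⟨0, hn⟩ := by
  by_contra hlt
  push_neg at hlt
  obtain ⟨hy0, hysum, D, hD, hyD⟩ := hy
  obtain ⟨hy'0, hy'sum, D', hD', hy'D⟩ := hy'
  set i0 : Fin n := ⟨0, hn⟩ with hi0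
  -- there is a state j that gains a seat
  have hex : ∃ j, y j < y' j := by
    by_contra hco
    push_neg at hco
    have hsl : ∑ i, y' i < ∑ i, y i :=
      Finset.sum_lt_sum (fun i _ => hco i) ⟨i0, Finset.mem_univ _, hlt⟩
    omega
  obtain ⟨j, hj⟩ := hex
  have hjne : j ≠ i0 := by
    rintro rfl; omega
  have hji0 : i0 < j := by
    rw [Fin.lt_def]
    show 0 < (j : ℕ)
    rcases Nat.eq_zero_or_pos (j : ℕ) with h0 | h0
    · exact absurd (Fin.ext h0 : j = i0) hjne
    · exact h0
  have hp0 : 0 < p i0 := hppos i0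
  have hpj : 0 < p j := hppos j
  have hpjp0 : p j < p i0 := hdec i0 j hji0
  -- divisor inequalities
  have hw0 : ((y i0 : ℝ) - 1) * D < p i0 ^ E := by
    have h : (y i0 : ℤ) = ⌈p i0 ^ E / D⌉ := hyD i0
    have h2 : ((y i0 : ℤ) - 1) < ⌈p i0 ^ E / D⌉ := by omega
    have h3 : (((y i0 : ℤ) - 1 : ℤ) : ℝ) < p i0 ^ E / D := Int.lt_ceil.mp h2
    have h4 : ((y i0 : ℝ) - 1) < p i0 ^ E / D := by push_cast at h3; linarith
    exact (lt_div_iff₀ hD).mp h4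
  have hwj : p j ^ E ≤ (y j : ℝ) * D := by
    have h : (y j : ℤ) = ⌈p j ^ E / D⌉ := hyD j
    have h2 : ⌈p j ^ E / D⌉ ≤ (y j : ℤ) := le_of_eq h.symm
    have h3 : p j ^ E / D ≤ ((y j : ℤ) : ℝ) := Int.ceil_le.mp h2
    have h4 : p j ^ E / D ≤ (y j : ℝ) := by push_cast at h3; linarith
    exact (div_le_iff₀ hD).mp h4
  have hw'0 : p i0 ^ E' ≤ (y' i0 : ℝ) * D' := by
    have h : (y' i0 : ℤ) = ⌈p i0 ^ E' / D'⌉ := hy'D i0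
    have h2 : ⌈p i0 ^ E' / D'⌉ ≤ (y' i0 : ℤ) := le_of_eq h.symm
    have h3 : p i0 ^ E' / D' ≤ ((y' i0 : ℤ) : ℝ) := Int.ceil_le.mp h2
    have h4 : p i0 ^ E' / D' ≤ (y' i0 : ℝ) := by push_cast at h3; linarith
    exact (div_le_iff₀ hD').mp h4
  have hw'j : (y j : ℝ) * D' < p j ^ E' := by
    have h : (y' j : ℤ) = ⌈p j ^ E' / D'⌉ := hy'D j
    have h2 : (y j : ℤ) < ⌈p j ^ E' / D'⌉ := by omega
    have h3 : ((y j : ℤ) : ℝ) < p j ^ E' / D' := Int.lt_ceil.mp h2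
    have h4 : (y j : ℝ) < p j ^ E' / D' := by push_cast at h3; linarith
    exact (lt_div_iff₀ hD').mp h4
  -- combine
  have hyle : (y' i0 : ℝ) ≤ (y i0 : ℝ) - 1 := by
    have : y' i0 + 1 ≤ y i0 := hlt
    have := Nat.cast_le (α := ℝ).mpr this
    push_cast at this; linarith
  have h1 : (y' i0 : ℝ) * D < p i0 ^ E :=
    lt_of_le_of_lt (mul_le_mul_of_nonneg_right hyle hD.le) hw0
  have hyj0 : (0 : ℝ) ≤ (y j : ℝ) := Nat.cast_nonneg _
  have hy'i0nn : (0 : ℝ) ≤ (y' i0 : ℝ) := Nat.cast_nonneg _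
  have key : p i0 ^ E' * p j ^ E < p i0 ^ E * p j ^ E' := by
    calc p i0 ^ E' * p j ^ E ≤ ((y' i0 : ℝ) * D') * ((y j : ℝ) * D) := by
          apply mul_le_mul hw'0 hwj (Real.rpow_nonneg hpj.le E)
          positivity
      _ = ((y' i0 : ℝ) * D) * ((y j : ℝ) * D') := by ring
      _ < p i0 ^ E * p j ^ E' := by
          apply mul_lt_mul'' h1 hw'j
          · positivity
          · positivity
  -- but power ratios are monotone in the exponent
  have hrp : p j ^ (E' - E) < p i0 ^ (E' - E) :=
    Real.rpow_lt_rpow hpj.le hpjp0 (by linarith)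
  have e1 : p i0 ^ E' = p i0 ^ E * p i0 ^ (E' - E) := by
    rw [← Real.rpow_add hp0]; ring_nf
  have e2 : p j ^ E' = p j ^ E * p j ^ (E' - E) := by
    rw [← Real.rpow_add hpj]; ring_nf
  rw [e1, e2] at key
  have hpE0 : 0 < p i0 ^ E := Real.rpow_pos_of_pos hp0 E
  have hpEj : 0 < p j ^ E := Real.rpow_pos_of_pos hpj E
  nlinarith [mul_pos hpE0 hpEj]
end

section
/- Let p_1 > p_2 > … > p_n > 0 be strictly decreasing positive populations and H ≥ n a natural number. Let 0 < E < E' be real exponents, let y be a valid apportionment of H seats for (p_1^E, …, p_n^E) and y' a valid apportionment of H seats for (p_1^{E'}, …, p_n^{E'}), both by the divisor method with rounding upwards. Then for every k with 0 ≤ k ≤ n, the aggregate number of seats of the n − k smallest states is nonincreasing in the exponent: ∑_{i=k+1}^n y_i ≥ ∑_{i=k+1}^n y'_i. -/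
/-- For `0 ≤ k ≤ n`, the aggregate number of seats of the
`n − k` smallest states (indices `k, …, n−1`) is nonincreasing in the
exponent. -/
theorem smallest_states_antitone {n : ℕ} (p : Fin n → ℝ)
    (hppos : ∀ i, 0 < p i) (hdec : ∀ i j : Fin n, i < j → p j < p i)
    (H : ℕ) (hH : n ≤ H) (E E' : ℝ) (hE : 0 < E) (hEE' : E < E')
    (y y' : Fin n → ℕ)
    (hy : IsValidApp (fun i => p i ^ E) H y)
    (hy' : IsValidApp (fun i => p i ^ E') H y') :
    ∀ k : ℕ, k ≤ n →
      ∑ i ∈ Finset.univ.filter (fun i : Fin n => k ≤ (i : ℕ)), y' i ≤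
        ∑ i ∈ Finset.univ.filter (fun i : Fin n => k ≤ (i : ℕ)), y i := by
  intro k hk
  by_contra hcon
  push_neg at hcon
  obtain ⟨hy_pos, hy_sum, D, hD, hyD⟩ := hy
  obtain ⟨hy'_pos, hy'_sum, D', hD', hy'D⟩ := hy'
  have hsplit : ∀ z : Fin n → ℕ,
      ∑ i ∈ Finset.univ.filter (fun i : Fin n => k ≤ (i : ℕ)), z i
      + ∑ i ∈ Finset.univ.filter (fun i : Fin n => ¬ k ≤ (i : ℕ)), z i = ∑ i, z i := by
    intro z
    exact Finset.sum_filter_add_sum_filter_not _ _ _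
  have hlt : ∑ i ∈ Finset.univ.filter (fun i : Fin n => ¬ k ≤ (i : ℕ)), y' i
      < ∑ i ∈ Finset.univ.filter (fun i : Fin n => ¬ k ≤ (i : ℕ)), y i := by
    have h1 := hsplit y
    have h2 := hsplit y'
    rw [hy_sum] at h1
    rw [hy'_sum] at h2
    omega
  obtain ⟨i, hi_mem, hi⟩ := Finset.exists_lt_of_sum_lt hlt
  obtain ⟨j, hj_mem, hj⟩ := Finset.exists_lt_of_sum_lt hcon
  simp only [Finset.mem_filter, Finset.mem_univ, true_and] at hi_mem hj_mem
  have hij : (i : ℕ) < (j : ℕ) := by omega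
  have hpj : p j < p i := hdec i j hij
  have ha : 0 < p i := hppos i
  have hb : 0 < p j := hppos j
  have hY' := hy'_pos i
  have hZ := hy_pos j
  -- ceiling facts
  have hup : ∀ (w : Fin n → ℝ) (z : Fin n → ℕ) (Dv : ℝ), 0 < Dv →
      (∀ l, (z l : ℤ) = ⌈w l / Dv⌉) → ∀ l, w l ≤ Dv * z l := by
    intro w z Dv hDv hz l
    have h := Int.le_ceil (w l / Dv)
    rw [← hz l] at h
    have h2 : w l / Dv ≤ (z l : ℝ) := by exact_mod_cast h
    calc w l = Dv * (w l / Dv) := by field_simp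
    _ ≤ Dv * z l := mul_le_mul_of_nonneg_left h2 hDv.le
  have hlow : ∀ (w : Fin n → ℝ) (z : Fin n → ℕ) (Dv : ℝ), 0 < Dv →
      (∀ l, (z l : ℤ) = ⌈w l / Dv⌉) → ∀ l, Dv * ((z l : ℝ) - 1) < w l := by
    intro w z Dv hDv hz l
    have h := Int.ceil_lt_add_one (w l / Dv)
    rw [← hz l] at h
    have h2 : (z l : ℝ) - 1 < w l / Dv := by push_cast at h ⊢; linarith
    calc Dv * ((z l : ℝ) - 1) < Dv * (w l / Dv) := mul_lt_mul_of_pos_left h2 hDv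
    _ = w l := by field_simp
  have haE : D * ((y i : ℝ) - 1) < p i ^ E := hlow _ y D hD hyD i
  have hbE : p j ^ E ≤ D * y j := hup _ y D hD hyD j
  have haE' : p i ^ E' ≤ D' * y' i := hup _ y' D' hD' hy'D i
  have hbE' : D' * ((y' j : ℝ) - 1) < p j ^ E' := hlow _ y' D' hD' hy'D j
  have hbEpos : (0:ℝ) < p j ^ E := Real.rpow_pos_of_pos hb E
  have hbE'pos : (0:ℝ) < p j ^ E' := Real.rpow_pos_of_pos hb E'
  have hZpos : (0:ℝ) < (y j : ℝ) := by exact_mod_cast hZ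
  have hY'pos : (0:ℝ) < (y' i : ℝ) := by exact_mod_cast hY'
  have hYi1 : (1:ℝ) ≤ (y i : ℝ) - 1 := by
    have : 2 ≤ y i := by omega
    have h2 : (2:ℝ) ≤ (y i : ℝ) := by exact_mod_cast this
    linarith
  have hZ'1 : (y j : ℝ) ≤ (y' j : ℝ) - 1 := by
    have : y j + 1 ≤ y' j := hj
    have h2 : (y j : ℝ) + 1 ≤ (y' j : ℝ) := by exact_mod_cast this
    linarith
  have hZ'1pos : (0:ℝ) < (y' j : ℝ) - 1 := lt_of_lt_of_le hZpos hZ'1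
  have hY'le : (y' i : ℝ) ≤ (y i : ℝ) - 1 := by
    have : y' i + 1 ≤ y i := hi
    have h2 : (y' i : ℝ) + 1 ≤ (y i : ℝ) := by exact_mod_cast this
    linarith
  -- Step 1: (y i - 1) / y j < p i ^ E / p j ^ E
  have h1 : ((y i : ℝ) - 1) / (y j : ℝ) < p i ^ E / p j ^ E := by
    rw [div_lt_div_iff₀ hZpos hbEpos]
    nlinarith [mul_le_mul_of_nonneg_left hbE (by linarith : (0:ℝ) ≤ (y i : ℝ) - 1),
      mul_lt_mul_of_pos_right haE hZpos]
  -- Step 2: p i ^ E' / p j ^ E' < y' i / (y' j - 1)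
  have h2 : p i ^ E' / p j ^ E' < (y' i : ℝ) / ((y' j : ℝ) - 1) := by
    rw [div_lt_div_iff₀ hbE'pos hZ'1pos]
    nlinarith [mul_le_mul_of_nonneg_right haE' (le_of_lt hZ'1pos),
      mul_lt_mul_of_pos_left hbE' hY'pos]
  -- Step 3: bridge
  have h3 : (y' i : ℝ) / ((y' j : ℝ) - 1) ≤ ((y i : ℝ) - 1) / (y j : ℝ) :=
    div_le_div₀ (by linarith) hY'le hZpos hZ'1
  -- Step 4: monotonicity in exponent
  have hratio : (1:ℝ) < p i / p j := (one_lt_div hb).2 hpj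
  have h4 : (p i / p j) ^ E < (p i / p j) ^ E' :=
    Real.rpow_lt_rpow_left_iff hratio |>.2 hEE'
  rw [Real.div_rpow ha.le hb.le, Real.div_rpow ha.le hb.le] at h4
  linarith
end

section
/- Let p_1 > p_2 > … > p_n > 0 be strictly decreasing positive populations and let H ≥ n be a natural number; write H = q·n + r with integers q ≥ 1 and 0 ≤ r < n. Then there exists E_0 > 0 such that for every exponent E with 0 < E < E_0, the vector y given by y_i = q + 1 for i ≤ r and y_i = q for i > r is the valid apportionment of H seats for (p_1^E, …, p_n^E) by the divisor method with rounding upwards. (For very small exponents, seats are apportioned almost equally, the larger states receiving the extra seats.) -/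
/-- For very small exponents, seats are apportioned almost
equally: writing `H = q·n + r` with `q ≥ 1` and `0 ≤ r < n`, there is
`E₀ > 0` such that for all `0 < E < E₀` the vector giving `q + 1` seats to
the `r` largest states (indices `0, …, r−1`) and `q` seats to the others is
the valid apportionment for the power-weighted populations `p ^ E`. -/
theorem small_exponent_apportionment {n : ℕ} (p : Fin n → ℝ)
    (hppos : ∀ i, 0 < p i) (hdec : ∀ i j : Fin n, i < j → p j < p i)
    (H : ℕ) (hH : n ≤ H) (q r : ℕ) (hq : 1 ≤ q) (hr : r < n)
    (hHqr : H = q * n + r) :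
    ∃ E₀ : ℝ, 0 < E₀ ∧ ∀ E : ℝ, 0 < E → E < E₀ →
      IsValidApp (fun i => p i ^ E) H
        (fun i => if (i : ℕ) < r then q + 1 else q) := by
  have hn : 0 < n := lt_of_le_of_lt (Nat.zero_le r) hr
  set m : Fin n := ⟨r, hr⟩ with hm
  set z : Fin n := ⟨0, hn⟩ with hz
  set l : Fin n := ⟨n - 1, by omega⟩ with hl
  have hmono : ∀ i j : Fin n, i ≤ j → p j ≤ p i := by
    intro i j h
    rcases lt_or_eq_of_le h with h' | h'
    · exact (hdec i j h').le
    · rw [h']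
  have hub : ∀ i, p i ≤ p z := fun i => hmono z i (by simp [Fin.le_def, hz])
  have hlb : ∀ i, p l ≤ p i := fun i => hmono i l (by simp [Fin.le_def, hl]; omega)
  set c : ℝ := p l / p z with hc
  have hc0 : 0 < c := div_pos (hppos l) (hppos z)
  have hqpos : (0:ℝ) < q := by exact_mod_cast hq
  have hq1pos : (0:ℝ) < (q:ℝ) + 1 := by linarith
  have hQ : (q:ℝ)/(q+1) < 1 := (div_lt_one hq1pos).2 (by linarith)
  have hcont : ContinuousAt (fun E : ℝ => c ^ E) 0 :=
    Real.continuousAt_const_rpow hc0.ne'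
  have h1 : Filter.Tendsto (fun E : ℝ => c ^ E) (nhds 0) (nhds 1) := by
    have := hcont.tendsto
    rwa [Real.rpow_zero] at this
  have hev : ∀ᶠ E in nhds (0:ℝ), (q:ℝ)/(q+1) < c ^ E :=
    h1.eventually (eventually_gt_nhds hQ)
  obtain ⟨E₀, hE₀pos, hE₀⟩ := Metric.eventually_nhds_iff.1 hev
  refine ⟨E₀, hE₀pos, fun E hE0 hEE₀ => ?_⟩
  have hcE : (q:ℝ)/(q+1) < c ^ E := hE₀ (by
    rw [Real.dist_eq, sub_zero, abs_of_pos hE0]; exact hEE₀)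
  -- ratio bounds
  have hratio_lb : ∀ i, c ≤ p i / p m :=
    fun i => div_le_div₀ (hppos i).le (hlb i) (hppos m) (hub m)
  have hratio_ub : ∀ i, p i / p m ≤ c⁻¹ := by
    intro i
    rw [hc, inv_div]
    exact div_le_div₀ (hppos z).le (hub i) (hppos l) (hlb m)
  have ht_lb : ∀ i, c ^ E ≤ (p i / p m) ^ E :=
    fun i => Real.rpow_le_rpow hc0.le (hratio_lb i) hE0.le
  have ht_ub : ∀ i, (p i / p m) ^ E ≤ (c ^ E)⁻¹ := by
    intro i
    calc (p i / p m) ^ E ≤ (c⁻¹) ^ E :=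
          Real.rpow_le_rpow (div_pos (hppos i) (hppos m)).le (hratio_ub i) hE0.le
      _ = (c ^ E)⁻¹ := Real.inv_rpow hc0.le E
  have hlow : ∀ i, ((q:ℝ) - 1) / q < (p i / p m) ^ E := by
    intro i
    have hle : ((q:ℝ) - 1) / q ≤ (q:ℝ) / (q + 1) := by
      rw [div_le_div_iff₀ hqpos hq1pos]; nlinarith
    exact lt_of_le_of_lt hle (lt_of_lt_of_le hcE (ht_lb i))
  have hhigh : ∀ i, (p i / p m) ^ E < ((q:ℝ) + 1) / q := by
    intro i
    have h2 : (c ^ E)⁻¹ < ((q:ℝ)/(q+1))⁻¹ :=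
      inv_strictAnti₀ (div_pos hqpos hq1pos) hcE
    rw [inv_div] at h2
    exact lt_of_le_of_lt (ht_ub i) h2
  refine ⟨fun i => by dsimp only; split <;> omega, ?_, ?_⟩
  · rw [Fin.sum_univ_eq_sum_range (fun j => if j < r then q + 1 else q)]
    rw [Finset.sum_ite, Finset.sum_const, Finset.sum_const]
    have h1 : (Finset.range n).filter (· < r) = Finset.range r := by
      ext j; simp; omega
    have h2 : (Finset.range n).filter (fun j => ¬ j < r) = Finset.Ico r n := by
      ext j; simp; omega
    rw [h1, h2, Finset.card_range, Nat.card_Ico, smul_eq_mul, smul_eq_mul, hHqr]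
    obtain ⟨k, rfl⟩ := Nat.exists_eq_add_of_le hr.le
    simp
    ring
  · refine ⟨p m ^ E / q, div_pos (Real.rpow_pos_of_pos (hppos m) E) hqpos, fun i => ?_⟩
    have hx : p i ^ E / (p m ^ E / q) = (p i / p m) ^ E * q := by
      rw [Real.div_rpow (hppos i).le (hppos m).le]
      have h0 : p m ^ E ≠ 0 := (Real.rpow_pos_of_pos (hppos m) E).ne'
      field_simp
    dsimp only
    rw [hx]
    by_cases hi : (i : ℕ) < r
    · rw [if_pos hi]
      symm
      rw [Int.ceil_eq_iff]
      have ht1 : 1 < (p i / p m) ^ E := by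
        rw [Real.one_lt_rpow_iff_of_pos (div_pos (hppos i) (hppos m))]
        exact Or.inl ⟨(one_lt_div (hppos m)).2 (hdec i m (by rwa [Fin.lt_def])), hE0⟩
      constructor
      · push_cast
        have := mul_lt_mul_of_pos_right ht1 hqpos
        rw [one_mul] at this
        linarith
      · push_cast
        have := mul_lt_mul_of_pos_right (hhigh i) hqpos
        rw [div_mul_cancel₀] at this
        · linarith
        · exact hqpos.ne'
    · rw [if_neg hi]
      symm
      rw [Int.ceil_eq_iff]
      have hmi : p i ≤ p m := hmono m i (by simp [Fin.le_def, hm]; omega)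
      have ht1 : (p i / p m) ^ E ≤ 1 :=
        Real.rpow_le_one (div_pos (hppos i) (hppos m)).le ((div_le_one (hppos m)).2 hmi) hE0.le
      constructor
      · push_cast
        have := mul_lt_mul_of_pos_right (hlow i) hqpos
        rw [div_mul_cancel₀] at this
        · linarith
        · exact hqpos.ne'
      · push_cast
        have := mul_le_mul_of_nonneg_right ht1 hqpos.le
        rw [one_mul] at this
        linarith
end

section
/- Let p_1 > p_2 > … > p_n > 0 be strictly decreasing positive populations and let H ≥ n be a natural number. Then there exists E_1 > 0 such that for every exponent E > E_1, the vector y given by y_1 = H − n + 1 and y_i = 1 for i ≥ 2 is the valid apportionment of H seats for (p_1^E, …, p_n^E) by the divisor method with rounding upwards. (For very large exponents, seats are apportioned as unequally as possible.) -/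
/-- For very large exponents, seats are apportioned as
unequally as possible: there is `E₁ > 0` such that for every `E > E₁` the
vector giving `H − n + 1` seats to the largest state (index `0`) and one
seat to each other state is the valid apportionment for `p ^ E`. -/
theorem large_exponent_apportionment {n : ℕ} (hn : 0 < n) (p : Fin n → ℝ)
    (hppos : ∀ i, 0 < p i) (hdec : ∀ i j : Fin n, i < j → p j < p i)
    (H : ℕ) (hH : n ≤ H) :
    ∃ E₁ : ℝ, 0 < E₁ ∧ ∀ E : ℝ, E₁ < E →
      IsValidApp (fun i => p i ^ E) H
        (fun i => if (i : ℕ) = 0 then H - n + 1 else 1) := by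
  haveI : NeZero n := ⟨hn.ne'⟩
  set m : ℕ := H - n + 1 with hm
  have hmpos : (0 : ℝ) < (m : ℝ) := by positivity
  -- key bound
  have key : ∃ E₁' : ℝ, 0 < E₁' ∧ ∀ E : ℝ, E₁' < E →
      (0 < E ∧ ∀ i : Fin n, (i : ℕ) ≠ 0 → p i ^ E * m ≤ p 0 ^ E) := by
    rcases Nat.lt_or_ge 1 n with h1 | h1
    · set i1 : Fin n := ⟨1, h1⟩ with hi1
      have hp0 : 0 < p 0 := hppos 0
      set r : ℝ := p i1 / p 0 with hr
      have hr0 : 0 < r := div_pos (hppos i1) hp0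
      have hr1 : r < 1 := by
        rw [hr, div_lt_one hp0]
        exact hdec 0 i1 (by simp [Fin.lt_def, hi1])
      have hlogr : Real.log r < 0 := Real.log_neg hr0 hr1
      refine ⟨max 1 (Real.log (1 / m) / Real.log r), lt_max_of_lt_left one_pos, ?_⟩
      intro E hE
      have hE0 : 0 < E := lt_of_lt_of_le one_pos (le_of_lt (lt_of_le_of_lt (le_max_left _ _) hE))
      have hq : Real.log (1 / m) / Real.log r < E := lt_of_le_of_lt (le_max_right _ _) hE
      have hrE : r ^ E ≤ 1 / (m : ℝ) := by
        have h2 : Real.log r * E < Real.log r * (Real.log (1 / m) / Real.log r) :=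
          mul_lt_mul_of_neg_left hq hlogr
        rw [mul_div_cancel₀ _ (ne_of_lt hlogr)] at h2
        have := Real.exp_lt_exp.mpr h2
        rw [Real.exp_log (by positivity : (0:ℝ) < 1 / (m:ℝ))] at this
        rw [Real.rpow_def_of_pos hr0]
        exact this.le
      refine ⟨hE0, fun i hi => ?_⟩
      have hle : p i ≤ p i1 := by
        rcases eq_or_lt_of_le (show i1 ≤ i from by
          rw [Fin.le_def]; simp only [hi1, Fin.val_mk]; omega) with h | h
        · rw [h]
        · exact (hdec i1 i h).le
      have h3 : p i ^ E ≤ p i1 ^ E :=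
        Real.rpow_le_rpow (hppos i).le hle hE0.le
      have h4 : p i1 ^ E * m ≤ p 0 ^ E := by
        have : (p i1 / p 0) ^ E = p i1 ^ E / p 0 ^ E :=
          Real.div_rpow (hppos i1).le hp0.le E
        rw [hr, this] at hrE
        have hp0E : 0 < p 0 ^ E := Real.rpow_pos_of_pos hp0 E
        rw [div_le_div_iff₀ hp0E hmpos] at hrE
        nlinarith
      nlinarith [Real.rpow_pos_of_pos (hppos i1) E]
    · refine ⟨1, one_pos, fun E hE => ⟨lt_trans one_pos hE, fun i hi => ?_⟩⟩
      exact absurd (by omega : (i : ℕ) = 0) hi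
  obtain ⟨E₁, hE₁pos, hkey⟩ := key
  refine ⟨E₁, hE₁pos, fun E hE => ?_⟩
  obtain ⟨hE0, hbound⟩ := hkey E hE
  have hp0E : 0 < p 0 ^ E := Real.rpow_pos_of_pos (hppos 0) E
  refine ⟨fun i => by by_cases h : (i : ℕ) = 0 <;> simp [h] <;> omega, ?_, ?_⟩
  · -- sum
    have : ∑ i : Fin n, (if (i : ℕ) = 0 then m else 1)
        = m + ∑ i ∈ Finset.univ.erase (0 : Fin n), 1 := by
      rw [← Finset.add_sum_erase _ _ (Finset.mem_univ (0 : Fin n))]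
      simp only [Fin.val_zero, if_pos rfl]
      congr 1
      refine Finset.sum_congr rfl fun i hi => ?_
      rw [if_neg]
      simp only [Finset.mem_erase] at hi
      exact fun h => hi.1 (Fin.ext (by simpa using h))
    rw [this]
    simp only [Finset.sum_const, smul_eq_mul, mul_one]
    rw [Finset.card_erase_of_mem (Finset.mem_univ _), Finset.card_univ, Fintype.card_fin]
    omega
  · refine ⟨p 0 ^ E / m, by positivity, fun i => ?_⟩
    by_cases h : (i : ℕ) = 0
    · have hi0 : i = 0 := Fin.ext (by simpa using h)
      subst hi0
      simp only [h, if_pos rfl]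
      have heq : p 0 ^ E / (p 0 ^ E / (m : ℝ)) = ((m : ℕ) : ℝ) := by
        field_simp
      rw [heq, Int.ceil_natCast]
      simp
    · simp only [if_neg h, Nat.cast_one]
      rw [eq_comm, Int.ceil_eq_iff]
      have hx : 0 < p i ^ E / (p 0 ^ E / ↑m) :=
        div_pos (Real.rpow_pos_of_pos (hppos i) E) (div_pos hp0E hmpos)
      refine ⟨by rw [Int.cast_one, sub_self]; exact hx, ?_⟩
      rw [Int.cast_one, div_le_one (by positivity), le_div_iff₀ hmpos]
      exact hbound i h
end

section
/- Let p_1 > p_2 > … > p_n > 0 be strictly decreasing positive populations and let H ≥ n be a natural number. Then for every integer m with ⌈H/n⌉ ≤ m ≤ H − n + 1 there exist a real exponent E > 0, a divisor D > 0, and a vector y = (y_1, …, y_n) of positive integers with ∑_{i=1}^n y_i = H, y_1 = m, and y_i − 1 ≤ p_i^E / D ≤ y_i for all i. (Every intermediate seat contingent for the largest state is achievable by some exponent, allowing ties to be broken either way in the upward rounding.) -/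
open Filter Topology

/-- Selection lemma: between pointwise lower and upper bounds whose sums
sandwich `T`, there is a vector with sum exactly `T`. -/
lemma sel_aux {ι : Type*} [DecidableEq ι] (s : Finset ι) (a b : ι → ℕ) :
    ∀ T : ℕ, (∀ i ∈ s, a i ≤ b i) → (∑ i ∈ s, a i) ≤ T → T ≤ ∑ i ∈ s, b i →
    ∃ y : ι → ℕ, (∀ i ∈ s, a i ≤ y i ∧ y i ≤ b i) ∧ ∑ i ∈ s, y i = T := by
  induction s using Finset.cons_induction with
  | empty =>
      intro T _ h1 h2
      simp only [Finset.sum_empty] at h1 h2 ⊢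
      exact ⟨a, by simp, by omega⟩
  | cons j s hj ih =>
      intro T hab h1 h2
      rw [Finset.sum_cons] at h1 h2
      have hab' : ∀ i ∈ s, a i ≤ b i := fun i hi => hab i (Finset.mem_cons_of_mem hi)
      have htu : ∑ i ∈ s, a i ≤ ∑ i ∈ s, b i := Finset.sum_le_sum hab'
      have habj : a j ≤ b j := hab j (Finset.mem_cons_self _ _)
      obtain ⟨y, hy, hsum⟩ := ih (T - max (a j) (T - ∑ i ∈ s, b i)) hab'
        (by omega) (by omega)
      refine ⟨Function.update y j (max (a j) (T - ∑ i ∈ s, b i)), ?_, ?_⟩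
      · intro i hi
        rcases Finset.mem_cons.mp hi with rfl | hi'
        · rw [Function.update_self]; omega
        · have hne : i ≠ j := by rintro rfl; exact hj hi'
          rw [Function.update_of_ne hne]; exact hy i hi'
      · rw [Finset.sum_cons, Function.update_self]
        have hupd : ∑ x ∈ s, Function.update y j (max (a j) (T - ∑ i ∈ s, b i)) x
            = ∑ x ∈ s, y x :=
          Finset.sum_congr rfl (fun i hi => Function.update_of_ne (by rintro rfl; exact hj hi) _ _)
        rw [hupd, hsum]
        omega

/-- Every intermediate seat contingent for the largest state is
achievable by some exponent, allowing ties to be broken either way in the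
upward rounding: for every integer `m` with `⌈H/n⌉ ≤ m ≤ H − n + 1` there are
an exponent `E > 0`, a divisor `D > 0`, and a tie-permissive apportionment
`y` (positive components, summing to `H`, with `y i − 1 ≤ pᵢ^E / D ≤ y i`)
whose largest-state contingent is `y 0 = m`. -/
theorem intermediate_contingent_achievable {n : ℕ} (hn : 0 < n)
    (p : Fin n → ℝ) (hppos : ∀ i, 0 < p i)
    (hdec : ∀ i j : Fin n, i < j → p j < p i)
    (H : ℕ) (hH : n ≤ H) (m : ℕ)
    (hm₁ : ⌈(H : ℝ) / (n : ℝ)⌉₊ ≤ m) (hm₂ : m ≤ H - n + 1) :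
    ∃ E : ℝ, 0 < E ∧ ∃ D : ℝ, 0 < D ∧ ∃ y : Fin n → ℕ,
      (∀ i, 0 < y i) ∧ (∑ i, y i = H) ∧ y ⟨0, hn⟩ = m ∧
      ∀ i, (y i : ℝ) - 1 ≤ p i ^ E / D ∧ p i ^ E / D ≤ (y i : ℝ) := by
  set i0 : Fin n := ⟨0, hn⟩ with hi0
  have hHpos : 0 < H := lt_of_lt_of_le hn hH
  have hm0 : 0 < m := by
    refine lt_of_lt_of_le ?_ hm₁
    exact Nat.ceil_pos.mpr (div_pos (by exact_mod_cast hHpos) (by exact_mod_cast hn))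
  have hmn : H ≤ m * n := by
    have h1 : (H : ℝ) / n ≤ m := le_trans (Nat.le_ceil _) (by exact_mod_cast hm₁)
    have h2 : (H : ℝ) ≤ m * n := by
      rw [div_le_iff₀ (by exact_mod_cast hn)] at h1; exact h1
    exact_mod_cast h2
  have hmn2 : m + (n - 1) ≤ H := by omega
  -- ratios
  set r : Fin n → ℝ := fun i => p i / p i0 with hr
  have hr0 : ∀ i, 0 < r i := fun i => div_pos (hppos i) (hppos i0)
  have hri0 : r i0 = 1 := div_self (ne_of_gt (hppos i0))
  have hrlt : ∀ i, i ≠ i0 → r i < 1 := by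
    intro i hi
    have h0le : i0 ≤ i := by
      rw [Fin.le_def]; exact Nat.zero_le _
    have h0i : i0 < i := lt_of_le_of_ne h0le (fun h => hi h.symm)
    exact (div_lt_one (hppos i0)).mpr (hdec i0 i h0i)
  have hr1 : ∀ i, r i ≤ 1 := by
    intro i
    by_cases hi : i = i0
    · rw [hi, hri0]
    · exact le_of_lt (hrlt i hi)
  -- quotients
  set q : ℝ → Fin n → ℝ := fun E i => (m : ℝ) * r i ^ E with hq
  have hqpos : ∀ E i, 0 < q E i := fun E i =>
    mul_pos (by exact_mod_cast hm0) (Real.rpow_pos_of_pos (hr0 i) E)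
  have hqi0 : ∀ E, q E i0 = (m : ℝ) := by
    intro E; simp [hq, hri0, Real.one_rpow]
  have hcont : ∀ i, Continuous fun E => q E i := by
    intro i
    exact continuous_const.mul
      (continuous_iff_continuousAt.mpr fun E =>
        Real.continuousAt_const_rpow (ne_of_gt (hr0 i)))
  have hqanti : ∀ i E E', E ≤ E' → q E' i ≤ q E i := by
    intro i E E' hEE
    exact mul_le_mul_of_nonneg_left
      (Real.rpow_le_rpow_of_exponent_ge (hr0 i) (hr1 i) hEE) (by positivity)
  set A : ℝ → ℕ := fun E => ∑ i, ⌈q E i⌉₊ with hA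
  set B : ℝ → ℕ := fun E => ∑ i, (if i = i0 then m else ⌊q E i⌋₊ + 1) with hB
  have hAi0 : ∀ E, ⌈q E i0⌉₊ = m := by
    intro E; rw [hqi0]; exact Nat.ceil_natCast m
  have hABle : ∀ E, A E ≤ B E := by
    intro E
    refine Finset.sum_le_sum fun i _ => ?_
    by_cases hi : i = i0
    · subst hi; rw [hAi0, if_pos rfl]
    · rw [if_neg hi]; exact Nat.ceil_le_floor_add_one _
  have hAanti : ∀ E E', E ≤ E' → A E' ≤ A E :=
    fun E E' hEE => Finset.sum_le_sum fun i _ => Nat.ceil_mono (hqanti i E E' hEE)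
  -- key existence of a good exponent
  have key : ∃ E : ℝ, 0 < E ∧ A E ≤ H ∧ H ≤ B E := by
    by_contra hbad
    push_neg at hbad
    have hbad' : ∀ E : ℝ, 0 < E → H < A E ∨ B E < H := by
      intro E hE
      rcases le_or_gt (A E) H with h | h
      · exact Or.inr (hbad E hE h)
      · exact Or.inl h
    -- small exponent: A E₀ ≥ n * m ≥ H
    have hsmall : ∃ E₀ : ℝ, 0 < E₀ ∧ H < A E₀ := by
      have h1 : ∀ᶠ E in 𝓝[>] (0 : ℝ), ∀ i, (m : ℝ) - 1 < q E i := by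
        apply eventually_nhdsWithin_of_eventually_nhds
        rw [eventually_all]
        intro i
        refine (hcont i).continuousAt.preimage_mem_nhds (f := fun E => q E i)
          (Ioi_mem_nhds ?_)
        show (m : ℝ) - 1 < q 0 i
        have hq00 : q 0 i = (m : ℝ) := by simp [hq]
        rw [hq00]
        have : (0:ℝ) < m := by exact_mod_cast hm0
        linarith
      have h2 : ∀ᶠ E in 𝓝[>] (0 : ℝ), (0 : ℝ) < E := self_mem_nhdsWithin
      obtain ⟨E₀, h₀, hE₀⟩ := (h1.and h2).exists
      refine ⟨E₀, hE₀, ?_⟩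
      have hge : ∀ i : Fin n, m ≤ ⌈q E₀ i⌉₊ := by
        intro i
        have := h₀ i
        have h3 : (m : ℝ) - 1 < (⌈q E₀ i⌉₊ : ℝ) := lt_of_lt_of_le this (Nat.le_ceil _)
        have h4 : (m : ℝ) < (⌈q E₀ i⌉₊ : ℝ) + 1 := by linarith
        exact_mod_cast Nat.lt_add_one_iff.mp (by exact_mod_cast h4)
      have hAge : m * n ≤ A E₀ := by
        calc m * n = ∑ _i : Fin n, m := by simp [mul_comm]
        _ ≤ A E₀ := Finset.sum_le_sum fun i _ => hge i
      rcases hbad' E₀ hE₀ with h | h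
      · exact h
      · exact absurd (le_trans (le_trans hmn hAge) (hABle E₀)) (not_le.mpr h)
    obtain ⟨E₀, hE₀pos, hE₀⟩ := hsmall
    -- large exponent: B E₁ ≤ m + (n-1) ≤ H
    have hlarge : ∃ E₁ : ℝ, 0 < E₁ ∧ B E₁ < H ∧ ∀ e, 0 < e → H < A e → e < E₁ := by
      have h1 : ∀ᶠ E in atTop, ∀ i : Fin n, i ≠ i0 → q E i < 1 := by
        rw [eventually_all]
        intro i
        by_cases hi : i = i0
        · exact Eventually.of_forall fun E h => absurd hi h
        · have htend : Tendsto (fun E => q E i) atTop (𝓝 0) := by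
            have := tendsto_rpow_atTop_of_base_lt_one (r i)
              (lt_of_lt_of_le (by norm_num) (le_of_lt (hr0 i))) (hrlt i hi)
            simpa [hq] using this.const_mul (m : ℝ)
          have := htend.eventually (eventually_lt_nhds (show (0:ℝ) < 1 by norm_num))
          filter_upwards [this] with E hE _ using hE
      have h2 : ∀ᶠ E in atTop, (0 : ℝ) < E := eventually_gt_atTop 0
      obtain ⟨E₁, h₁, hE₁pos⟩ := (h1.and h2).exists
      have hBle : B E₁ ≤ m + (n - 1) := by
        show (∑ i, (if i = i0 then m else ⌊q E₁ i⌋₊ + 1)) ≤ m + (n - 1)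
        rw [Fintype.sum_eq_add_sum_compl i0, if_pos rfl]
        have : ∑ i ∈ {i0}ᶜ, (if i = i0 then m else ⌊q E₁ i⌋₊ + 1) ≤ n - 1 := by
          have hcard : ({i0}ᶜ : Finset (Fin n)).card = n - 1 := by
            rw [Finset.card_compl, Finset.card_singleton, Fintype.card_fin]
          calc ∑ i ∈ {i0}ᶜ, (if i = i0 then m else ⌊q E₁ i⌋₊ + 1)
              ≤ ∑ _i ∈ {i0}ᶜ, 1 := by
                refine Finset.sum_le_sum fun i hi => ?_
                have hine : i ≠ i0 := by simpa using hi
                rw [if_neg hine]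
                have : ⌊q E₁ i⌋₊ = 0 :=
                  Nat.floor_eq_zero.mpr (h₁ i hine)
                omega
            _ = n - 1 := by rw [Finset.sum_const, smul_eq_mul, mul_one, hcard]
        omega
      have hBlt : B E₁ < H ∨ B E₁ = H := by
        rcases lt_or_eq_of_le (le_trans hBle hmn2) with h | h
        · exact Or.inl h
        · exact Or.inr h
      rcases hBlt with h | h
      · refine ⟨E₁, hE₁pos, h, ?_⟩
        intro e he hAe
        by_contra hc
        push_neg at hc
        have := hAanti E₁ e hc
        have := hABle E₁
        omega
      · exfalso
        rcases hbad' E₁ hE₁pos with hh | hh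
        · have := hABle E₁; omega
        · omega
    obtain ⟨E₁, hE₁pos, hBE₁, hub⟩ := hlarge
    -- supremum of the "A too big" set
    set S : Set ℝ := {E | 0 < E ∧ H < A E} with hS
    have hSne : S.Nonempty := ⟨E₀, hE₀pos, hE₀⟩
    have hSbdd : BddAbove S := ⟨E₁, fun e he => le_of_lt (hub e he.1 he.2)⟩
    set c : ℝ := sSup S with hc
    have hcpos : 0 < c := lt_of_lt_of_le hE₀pos (le_csSup hSbdd ⟨hE₀pos, hE₀⟩)
    rcases hbad' c hcpos with hAc | hBc
    · -- H < A c : find E just above c with B E ≥ A c, contradiction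
      have h1 : ∀ᶠ E in 𝓝[>] c, ∀ i, ((⌈q c i⌉₊ : ℝ) - 1) < q E i := by
        apply eventually_nhdsWithin_of_eventually_nhds
        rw [eventually_all]
        intro i
        refine (hcont i).continuousAt.preimage_mem_nhds (f := fun E => q E i)
          (Ioi_mem_nhds ?_)
        have h5 : (⌈q c i⌉₊ : ℝ) < q c i + 1 := Nat.ceil_lt_add_one (le_of_lt (hqpos c i))
        linarith
      have h2 : ∀ᶠ E in 𝓝[>] c, c < E := self_mem_nhdsWithin
      obtain ⟨E₂, h₂, hcE₂⟩ := (h1.and h2).exists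
      have hE₂pos : 0 < E₂ := lt_trans hcpos hcE₂
      have hBge : A c ≤ B E₂ := by
        refine Finset.sum_le_sum fun i _ => ?_
        by_cases hi : i = i0
        · subst hi; rw [hAi0, if_pos rfl]
        · rw [if_neg hi]
          have h3 : q E₂ i < (⌊q E₂ i⌋₊ : ℝ) + 1 := Nat.lt_floor_add_one _
          have h4 : ((⌈q c i⌉₊ : ℝ) - 1) < (⌊q E₂ i⌋₊ : ℝ) + 1 := lt_trans (h₂ i) h3
          have h5 : (⌈q c i⌉₊ : ℝ) < (⌊q E₂ i⌋₊ : ℝ) + 2 := by linarith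
          have h6 : ⌈q c i⌉₊ < ⌊q E₂ i⌋₊ + 2 := by exact_mod_cast h5
          omega
      rcases hbad' E₂ hE₂pos with h | h
      · exact absurd (le_csSup hSbdd ⟨hE₂pos, h⟩) (not_le.mpr hcE₂)
      · omega
    · -- B c < H : find E just below c with A E ≤ B c, contradiction with sup
      have h1 : ∀ᶠ E in 𝓝[<] c, ∀ i, q E i < (⌊q c i⌋₊ : ℝ) + 1 := by
        apply eventually_nhdsWithin_of_eventually_nhds
        rw [eventually_all]
        intro i
        refine (hcont i).continuousAt.preimage_mem_nhds (f := fun E => q E i)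
          (Iio_mem_nhds ?_)
        exact Nat.lt_floor_add_one _
      have h2 : ∀ᶠ E in 𝓝[<] c, E < c := self_mem_nhdsWithin
      obtain ⟨E₃, h₃, hE₃c⟩ := (h1.and h2).exists
      have hAle : A E₃ ≤ B c := by
        refine Finset.sum_le_sum fun i _ => ?_
        by_cases hi : i = i0
        · subst hi; rw [hAi0, if_pos rfl]
        · rw [if_neg hi]
          exact Nat.ceil_le.mpr (le_of_lt (by exact_mod_cast h₃ i))
      obtain ⟨e, he, hE₃e⟩ := exists_lt_of_lt_csSup hSne hE₃c
      have := hAanti E₃ e (le_of_lt hE₃e)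
      have : A e ≤ A E₃ := hAanti E₃ e (le_of_lt hE₃e)
      have hh := he.2
      omega
  obtain ⟨E, hEpos, hAH, hHB⟩ := key
  refine ⟨E, hEpos, p i0 ^ E / m, ?_, ?_⟩
  · exact div_pos (Real.rpow_pos_of_pos (hppos i0) E) (by exact_mod_cast hm0)
  · have hquot : ∀ i, p i ^ E / (p i0 ^ E / m) = q E i := by
      intro i
      show p i ^ E / (p i0 ^ E / m) = (m : ℝ) * ((p i / p i0) ^ E)
      rw [Real.div_rpow (le_of_lt (hppos i)) (le_of_lt (hppos i0))]
      have hp0 : p i0 ^ E ≠ 0 := ne_of_gt (Real.rpow_pos_of_pos (hppos i0) E)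
      have hm' : (m : ℝ) ≠ 0 := by
        have h9 : (0:ℝ) < m := by exact_mod_cast hm0
        exact ne_of_gt h9
      field_simp
    have hab : ∀ i : Fin n, ⌈q E i⌉₊ ≤ (if i = i0 then m else ⌊q E i⌋₊ + 1) := by
      intro i
      by_cases hi : i = i0
      · subst hi; rw [hAi0, if_pos rfl]
      · rw [if_neg hi]; exact Nat.ceil_le_floor_add_one _
    obtain ⟨y, hy, hsum⟩ := sel_aux Finset.univ
      (fun i => ⌈q E i⌉₊) (fun i => if i = i0 then m else ⌊q E i⌋₊ + 1) H
      (fun i _ => hab i) hAH hHB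
    have hy1 : ∀ i, ⌈q E i⌉₊ ≤ y i := fun i => (hy i (Finset.mem_univ i)).1
    have hy2 : ∀ i, y i ≤ (if i = i0 then m else ⌊q E i⌋₊ + 1) :=
      fun i => (hy i (Finset.mem_univ i)).2
    refine ⟨y, ?_, hsum, ?_, ?_⟩
    · intro i
      have h1 := hy1 i
      have hcp : 0 < ⌈q E i⌉₊ := Nat.ceil_pos.mpr (hqpos E i)
      omega
    · have h1 := hy1 i0
      have h2 := hy2 i0
      rw [hAi0] at h1
      rw [if_pos rfl] at h2
      exact le_antisymm h2 h1
    · intro i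
      rw [hquot i]
      constructor
      · have h2 := hy2 i
        by_cases hi : i = i0
        · subst hi
          rw [if_pos rfl] at h2
          rw [hqi0]
          have : (y i0 : ℝ) ≤ m := by exact_mod_cast h2
          linarith
        · rw [if_neg hi] at h2
          have h3 : (y i : ℝ) ≤ (⌊q E i⌋₊ : ℝ) + 1 := by exact_mod_cast h2
          have h4 : (⌊q E i⌋₊ : ℝ) ≤ q E i := Nat.floor_le (le_of_lt (hqpos E i))
          linarith
      · have h3 : (⌈q E i⌉₊ : ℝ) ≤ y i := by exact_mod_cast hy1 i
        exact le_trans (Nat.le_ceil _) h3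
end

section
/- Let n ≥ 2 and let p_1, …, p_n be positive reals with p_1 > p_i for all i ≥ 2. Then for every real t with 1/n < t < 1 there exists a unique exponent E > 0 such that p_1^E / ∑_{i=1}^n p_i^E = t. (The initialization equation for the power-weighted variant is uniquely solvable.) -/
open Finset Filter Set

/-- The initialization equation of the power-weighted variant
is uniquely solvable: for every `t` with `1/n < t < 1` there is a unique
exponent `E > 0` with `p₁^E / ∑ᵢ pᵢ^E = t`. -/
theorem ideal_share_equation_unique_solution {n : ℕ} (hn : 2 ≤ n)
    (p : Fin n → ℝ) (hppos : ∀ i, 0 < p i)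
    (hmax : ∀ i : Fin n, i ≠ ⟨0, by omega⟩ → p i < p ⟨0, by omega⟩)
    (t : ℝ) (ht₁ : 1 / (n : ℝ) < t) (ht₂ : t < 1) :
    ∃! E : ℝ, 0 < E ∧ p ⟨0, by omega⟩ ^ E / ∑ i, p i ^ E = t := by
  set i0 : Fin n := ⟨0, by omega⟩ with hi0
  have hnpos : (0 : ℝ) < n := by positivity
  have ht0 : 0 < t := lt_trans (by positivity) ht₁
  set r : Fin n → ℝ := fun i => p i / p i0 with hr
  have hr_pos : ∀ i, 0 < r i := fun i => div_pos (hppos i) (hppos i0)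
  have hr0 : r i0 = 1 := div_self (hppos i0).ne'
  have hrlt : ∀ i, i ≠ i0 → r i < 1 := fun i hi =>
    (div_lt_one (hppos i0)).2 (hmax i hi)
  set g : ℝ → ℝ := fun E => ∑ i, r i ^ E with hg
  have hcont : Continuous g := by
    apply continuous_finset_sum
    intro i _
    exact (Real.continuous_exp.comp (continuous_const.mul continuous_id)).congr
      fun E => (Real.rpow_def_of_pos (hr_pos i) E).symm
  have hg0 : g 0 = n := by simp [hg]
  have hganti : StrictAnti g := by
    intro x y hxy
    apply Finset.sum_lt_sum
    · intro i _
      rcases eq_or_ne i i0 with h | h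
      · simp [h, hr0]
      · exact Real.rpow_le_rpow_of_exponent_ge (hr_pos i) (hrlt i h).le hxy.le
    · refine ⟨⟨1, by omega⟩, Finset.mem_univ _, ?_⟩
      have h1 : (⟨1, by omega⟩ : Fin n) ≠ i0 := by simp [hi0, Fin.ext_iff]
      exact Real.rpow_lt_rpow_of_exponent_gt (hr_pos _) (hrlt _ h1) hxy
  have hgpos : ∀ E, 0 < g E := fun E =>
    Finset.sum_pos (fun i _ => Real.rpow_pos_of_pos (hr_pos i) E) ⟨i0, Finset.mem_univ _⟩
  -- limit at infinity
  have hgt : Tendsto g atTop (nhds 1) := by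
    have h1 : Tendsto g atTop (nhds (∑ i : Fin n, if i = i0 then (1:ℝ) else 0)) := by
      apply tendsto_finset_sum
      intro i _
      rcases eq_or_ne i i0 with h | h
      · rw [if_pos h, h, hr0]
        exact Tendsto.congr (fun E => (Real.one_rpow E).symm) tendsto_const_nhds
      · simp only [if_neg h]
        exact tendsto_rpow_atTop_of_base_lt_one (r i)
          (by linarith [hr_pos i]) (hrlt i h)
    simpa using h1
  have h1t : 1 < 1 / t := (one_lt_div ht0).2 ht₂
  have htn : 1 / t < n := by
    rw [div_lt_iff₀ ht0]
    calc (1:ℝ) = n * (1 / n) := by field_simp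
    _ < n * t := by exact mul_lt_mul_of_pos_left ht₁ hnpos
  -- find M with g M < 1/t
  obtain ⟨M, hM⟩ := (hgt.eventually_lt_const h1t).exists
  set M' := max M 0 with hM'
  have hMM' : g M' ≤ g M := hganti.antitone (le_max_left _ _)
  have hM'0 : (0:ℝ) ≤ M' := le_max_right _ _
  -- IVT
  have hiv := intermediate_value_Icc' hM'0 hcont.continuousOn
  have hmem : (1 / t) ∈ Icc (g M') (g 0) := ⟨le_trans hMM' hM.le, by rw [hg0]; exact htn.le⟩
  obtain ⟨E, hEmem, hEeq⟩ := hiv hmem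
  have hEpos : 0 < E := by
    rcases lt_or_eq_of_le hEmem.1 with h | h
    · exact h
    · exfalso; rw [← h, hg0] at hEeq; linarith
  -- the key reformulation
  have key : ∀ F : ℝ, p i0 ^ F / ∑ i, p i ^ F = t ↔ g F = 1 / t := by
    intro F
    have hsum : ∑ i, p i ^ F = p i0 ^ F * g F := by
      rw [hg, Finset.mul_sum]
      apply Finset.sum_congr rfl
      intro i _
      rw [← Real.mul_rpow (hppos i0).le (hr_pos i).le]
      rw [hr]
      rw [mul_comm, div_mul_cancel₀ _ (hppos i0).ne']
    have hp0 : (0:ℝ) < p i0 ^ F := Real.rpow_pos_of_pos (hppos i0) F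
    rw [hsum, div_mul_eq_div_div, div_self hp0.ne']
    constructor
    · intro h
      rw [div_eq_iff (hgpos F).ne'] at h
      rw [eq_div_iff ht0.ne']
      linarith
    · intro h
      rw [h]
      rw [one_div_one_div]
  refine ⟨E, ⟨hEpos, (key E).2 hEeq⟩, ?_⟩
  rintro F ⟨hFpos, hFeq⟩
  exact hganti.injective (((key F).1 hFeq).trans hEeq.symm)
end
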